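/- arXiv:1711.05486 — 2 statements merged into one kernel-verified Lean document; each statement's English description precedes it below -/
import Mathlib

section
/- Let λ* ∈ ℝⁿ have all coordinates strictly positive and define D(λ) = Σ_{i=1}^n ( λ_i - λ*_i + λ*_i ( ln λ*_i - ln λ_i ) ) on the open positive orthant. Then for every c ≥ 0 the sublevel set { λ ∈ ℝⁿ : all λ_i > 0 and D(λ) ≤ c } is a compact subset of ℝⁿ. -/
theorem bregman_sublevel_compact (n : ℕ) (lamStar : Fin n → ℝ)
    (hpos : ∀ i, 0 < lamStar i)
    (D : (Fin n → ℝ) → ℝ)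
    (hD : ∀ lam, D lam = ∑ i, (lam i - lamStar i + lamStar i * (Real.log (lamStar i) - Real.log (lam i))))
    (c : ℝ) (hc : 0 ≤ c) :
    IsCompact {lam : Fin n → ℝ | (∀ i, 0 < lam i) ∧ D lam ≤ c} := by
  set m : Fin n → ℝ := fun i => Real.exp (Real.log (lamStar i) - 1 - c / lamStar i) with hm
  set M : Fin n → ℝ := fun i => 2*c + 2*lamStar i * Real.log 2 with hMdef
  have hmpos : ∀ i, 0 < m i := fun i => Real.exp_pos _
  -- each term is nonnegative
  have hterm : ∀ (a x : ℝ), 0 < a → 0 < x →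
      0 ≤ x - a + a * (Real.log a - Real.log x) := by
    intro a x ha hx
    have h := Real.log_le_sub_one_of_pos (show 0 < x/a by positivity)
    rw [Real.log_div hx.ne' ha.ne'] at h
    have hxa : a * (x/a) = x := by field_simp
    nlinarith [mul_le_mul_of_nonneg_left h ha.le]
  -- membership implies each term ≤ c
  have hcoord : ∀ lam : Fin n → ℝ, (∀ i, 0 < lam i) → D lam ≤ c → ∀ i,
      lam i - lamStar i + lamStar i * (Real.log (lamStar i) - Real.log (lam i)) ≤ c := by
    intro lam hp hle i
    have hDe := hD lam
    have hs := Finset.single_le_sum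
      (f := fun j => lam j - lamStar j + lamStar j * (Real.log (lamStar j) - Real.log (lam j)))
      (fun j _ => hterm _ _ (hpos j) (hp j)) (Finset.mem_univ i)
    rw [hDe] at hle
    exact le_trans hs hle
  have hsub : {lam : Fin n → ℝ | (∀ i, 0 < lam i) ∧ D lam ≤ c} ⊆ Set.Icc m M := by
    rintro lam ⟨hp, hle⟩
    constructor
    · intro i
      have h := hcoord lam hp hle i
      have ha := hpos i
      have hx := hp i
      have h1 : lamStar i * (Real.log (lamStar i) - Real.log (lam i)) ≤ c + lamStar i := by
        nlinarith
      have h2 : Real.log (lamStar i) - Real.log (lam i) ≤ (c + lamStar i) / lamStar i :=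
        (le_div_iff₀ ha).mpr (by nlinarith)
      have h3 : (c + lamStar i) / lamStar i = c / lamStar i + 1 := by
        field_simp
      have hlog : Real.log (lamStar i) - 1 - c / lamStar i ≤ Real.log (lam i) := by
        rw [h3] at h2; linarith
      calc m i ≤ Real.exp (Real.log (lam i)) := Real.exp_le_exp.mpr hlog
        _ = lam i := Real.exp_log hx
    · intro i
      have h := hcoord lam hp hle i
      have ha := hpos i
      have hx := hp i
      have h2a : (0:ℝ) < 2 * lamStar i := by linarith
      have hlog := Real.log_le_sub_one_of_pos (show 0 < lam i / (2*lamStar i) by positivity)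
      rw [Real.log_div hx.ne' h2a.ne'] at hlog
      have hl2 : Real.log (2 * lamStar i) = Real.log 2 + Real.log (lamStar i) :=
        Real.log_mul two_ne_zero ha.ne'
      have hmul : lamStar i * (lam i / (2 * lamStar i)) = lam i / 2 := by
        field_simp
      -- a*(log x - log 2 - log a) ≤ x/2 - a
      have h4 : lamStar i * (Real.log (lam i) - (Real.log 2 + Real.log (lamStar i)))
          ≤ lam i / 2 - lamStar i := by
        rw [← hl2, ← hmul]
        nlinarith
      show lam i ≤ 2*c + 2*lamStar i * Real.log 2
      nlinarith
  -- the set equals box ∩ sublevel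
  have hset : {lam : Fin n → ℝ | (∀ i, 0 < lam i) ∧ D lam ≤ c}
      = Set.Icc m M ∩ D ⁻¹' Set.Iic c := by
    ext lam
    constructor
    · intro h
      exact ⟨hsub h, h.2⟩
    · rintro ⟨hbox, hle⟩
      exact ⟨fun i => lt_of_lt_of_le (hmpos i) (hbox.1 i), hle⟩
  have hDcont : ContinuousOn D (Set.Icc m M) := by
    have hDfun : D = fun lam => ∑ i, (lam i - lamStar i +
        lamStar i * (Real.log (lamStar i) - Real.log (lam i))) := funext hD
    rw [hDfun]
    apply continuousOn_finset_sum
    intro i _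
    apply ContinuousOn.add
    · exact ((continuous_apply i).continuousOn).sub continuousOn_const
    · apply continuousOn_const.mul
      apply continuousOn_const.sub
      exact Real.continuousOn_log.comp (continuous_apply i).continuousOn
        (fun lam hlam => ne_of_gt (lt_of_lt_of_le (hmpos i) (hlam.1 i)))
  have hclosed : IsClosed ({lam : Fin n → ℝ | (∀ i, 0 < lam i) ∧ D lam ≤ c}) := by
    rw [hset]
    exact hDcont.preimage_isClosed_of_isClosed isClosed_Icc isClosed_Iic
  exact IsCompact.of_isClosed_subset isCompact_Icc hclosed hsub
end

section
/- Let k₀, k₁, …, k_m ∈ {1,…,n} be pairwise distinct indices with m ≥ 1, and define vector fields B_j : ℝⁿ → ℝⁿ recursively by B_1 = h_{k₁,k₀} and B_{j+1} = [h_{k_{j+1},k_j}, B_j] for 1 ≤ j < m. Then B_m(z) = z_{k_m} · e_{k₀} for all z ∈ ℝⁿ. -/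
/-- The `b`-th standard basis vector of `ℝⁿ`. -/
def stdBasis (n : ℕ) (b : Fin n) : Fin n → ℝ := Pi.single b 1

/-- The vector field `h_{a,b}(z) = z_a • e_b`. -/
def hVF (n : ℕ) (a b : Fin n) : (Fin n → ℝ) → (Fin n → ℝ) :=
  fun z => z a • stdBasis n b

/-- Lie bracket of vector fields on `ℝⁿ`: `[f,g](z) = Dg(z) f(z) - Df(z) g(z)`. -/
noncomputable def lieBracketVF (n : ℕ) (f g : (Fin n → ℝ) → (Fin n → ℝ)) :
    (Fin n → ℝ) → (Fin n → ℝ) :=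
  fun z => fderiv ℝ g z (f z) - fderiv ℝ f z (g z)

/-- `hVF` as a continuous linear map. -/
noncomputable def hCLM (n : ℕ) (a b : Fin n) : (Fin n → ℝ) →L[ℝ] (Fin n → ℝ) :=
  (ContinuousLinearMap.proj a).smulRight (stdBasis n b)

lemma hVF_eq_hCLM (n : ℕ) (a b : Fin n) : hVF n a b = hCLM n a b := by
  rfl

lemma fderiv_hVF (n : ℕ) (a b : Fin n) (z : Fin n → ℝ) :
    fderiv ℝ (hVF n a b) z = hCLM n a b := by
  rw [hVF_eq_hCLM]
  exact (hCLM n a b).fderiv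

lemma bracket_hVF (n : ℕ) (a b c : Fin n) (hac : a ≠ c) :
    lieBracketVF n (hVF n a b) (hVF n b c) = hVF n a c := by
  funext z
  simp only [lieBracketVF, fderiv_hVF, hCLM, hVF,
    ContinuousLinearMap.smulRight_apply, ContinuousLinearMap.proj_apply]
  simp [stdBasis, Pi.single_apply, hac, smul_smul]

theorem iterated_bracket_along_path (n m : ℕ) (hm : 1 ≤ m)
    (k : ℕ → Fin n)
    (hinj : ∀ i j, i ≤ m → j ≤ m → k i = k j → i = j)
    (B : ℕ → (Fin n → ℝ) → (Fin n → ℝ))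
    (hB1 : B 1 = hVF n (k 1) (k 0))
    (hBstep : ∀ j, 1 ≤ j → j < m →
      B (j + 1) = lieBracketVF n (hVF n (k (j + 1)) (k j)) (B j)) :
    ∀ z : Fin n → ℝ, B m z = z (k m) • stdBasis n (k 0) := by
  suffices h : ∀ j, 1 ≤ j → j ≤ m → B j = hVF n (k j) (k 0) by
    intro z
    rw [h m hm le_rfl]; rfl
  intro j
  induction j with
  | zero => intro h; omega
  | succ j ih =>
    intro _ hjm
    rcases Nat.eq_zero_or_pos j with hj0 | hj1
    · subst hj0; exact hB1
    · rw [hBstep j hj1 (by omega), ih hj1 (by omega)]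
      exact bracket_hVF n (k (j+1)) (k j) (k 0) fun h =>
        by have := hinj (j+1) 0 (by omega) (by omega) h; omega
end
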